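/- arXiv:2412.00336 — 3 statements merged into one kernel-verified Lean document; each statement's English description precedes it below -/
import Mathlib

section
/- For all n ≥ 2, the number of nonnesting permutations of the multiset {1,1,2,2,…,n,n} that avoid all three patterns 132, 213, and 312 equals n + 2. -/
/-- `w` is a permutation of the multiset `{1,1,2,2,…,n,n}`:
a word in which every value in `{1,…,n}` occurs exactly twice
and no other value occurs. -/
def IsMultisetPerm (n : ℕ) (w : List ℕ) : Prop :=
  ∀ i : ℕ, w.count i = if 1 ≤ i ∧ i ≤ n then 2 else 0

/-- `t` is order-isomorphic to the word `σ`: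
same length, and entries compare (both `<` and `=`) in the same way. -/
def OrderIsoWord (t σ : List ℕ) : Prop :=
  t.length = σ.length ∧
  ∀ r s : ℕ, r < σ.length → s < σ.length →
    ((t.getD r 0 < t.getD s 0 ↔ σ.getD r 0 < σ.getD s 0) ∧
     (t.getD r 0 = t.getD s 0 ↔ σ.getD r 0 = σ.getD s 0))

/-- `w` contains the pattern `σ`: some subsequence of `w`
is order-isomorphic to `σ`. -/
def Contains (w σ : List ℕ) : Prop :=
  ∃ t : List ℕ, t.Sublist w ∧ OrderIsoWord t σ

/-- `w` avoids the pattern `σ`. -/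
def Avoids (w σ : List ℕ) : Prop := ¬ Contains w σ

/-- `w` is a nonnesting permutation of `{1,1,2,2,…,n,n}`:
it avoids the patterns `1221` and `2112`. -/
def IsNonnesting (n : ℕ) (w : List ℕ) : Prop :=
  IsMultisetPerm n w ∧ Avoids w [1,2,2,1] ∧ Avoids w [2,1,1,2]

/-!
Split such a word `w` for `n ≥ 3` around its two `1`s as `w = u 1 v 1 z`. Avoiding `213` and
`312` forces any two letters separated by a `1` to be equal, so if two of `u`, `v`, `z` were
nonempty, `w` would use only two values. Hence `w = 1 1 z`, which avoids `132` only if it is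
sorted; or `w = 1 v 1`, which contains `1221`; or `w = u 1 1` with `u` a raised copy of such a
word for `n - 1`. Conversely, raising every letter by one and appending `1 1` preserves all five
avoidances, so the count grows by one with `n`, from the words `1122, 1212, 2121, 2211` at `n = 2`.
-/

open List

theorem sublist_of_concat_sublist_append {α : Type*} {l l₁ l₂ : List α} {a : α}
    (ha : a ∉ l₂) (h : l ++ [a] <+ l₁ ++ l₂) : l ++ [a] <+ l₁ := by
  obtain ⟨t₁, t₂, heq, h₁, h₂⟩ := sublist_append_iff.1 h
  obtain rfl | ⟨t, b, rfl⟩ := t₂.eq_nil_or_concat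
  · simpa [heq] using h₁
  · rw [concat_eq_append, ← append_assoc] at heq
    obtain ⟨-, hab⟩ := append_inj' heq rfl
    rw [singleton_inj] at hab
    exact absurd (h₂.subset (by simp [hab])) ha

theorem cons_sublist_append_cons {α : Type*} {l₁ l₂ : List α} {x a y : α} (hx : x ∈ l₁)
    (hy : y ∈ l₂) : [x, a, y] <+ l₁ ++ a :: l₂ :=
  (singleton_sublist.2 hx).append ((singleton_sublist.2 hy).cons_cons a)

theorem exists_eq_append_cons_append_cons_of_count_eq_two {α : Type*} [DecidableEq α]
    {l : List α} {a : α} (h : l.count a = 2) :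
    ∃ u v z, l = u ++ a :: (v ++ a :: z) ∧ a ∉ u ∧ a ∉ v ∧ a ∉ z := by
  obtain ⟨r₁, r₂, rfl, h₁, h₂⟩ :=
    append_sublist_iff.1 (show [a] ++ [a] <+ l from replicate_sublist_iff.2 h.ge)
  obtain ⟨u, v, rfl⟩ := append_of_mem (singleton_sublist.1 h₁)
  obtain ⟨v', z, rfl⟩ := append_of_mem (singleton_sublist.1 h₂)
  refine ⟨u, v ++ v', z, by simp, ?_⟩
  simp only [count_append, count_cons_self] at h
  simp only [← count_pos_iff, count_append]
  omega

instance (t σ : List ℕ) : Decidable (OrderIsoWord t σ) :=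
  decidable_of_iff (t.length = σ.length ∧ ∀ r < σ.length, ∀ s < σ.length,
      ((t.getD r 0 < t.getD s 0 ↔ σ.getD r 0 < σ.getD s 0) ∧
       (t.getD r 0 = t.getD s 0 ↔ σ.getD r 0 = σ.getD s 0)))
    (and_congr_right fun _ => ⟨fun h r s hr hs => h r hr s hs, fun h r hr s hs => h r s hr hs⟩)

instance (w σ : List ℕ) : Decidable (Avoids w σ) :=
  decidable_of_iff (∀ t ∈ w.sublists, ¬ OrderIsoWord t σ) (by simp [Avoids, Contains])

theorem Avoids.of_sublist {w u σ : List ℕ} (h : Avoids w σ) (hu : u <+ w) : Avoids u σ :=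
  fun ⟨t, ht, hiso⟩ => h ⟨t, ht.trans hu, hiso⟩

theorem orderIsoWord_map_iff {f : ℕ → ℕ} (hf : StrictMono f) {t σ : List ℕ} :
    OrderIsoWord (t.map f) σ ↔ OrderIsoWord t σ := by
  have hget : ∀ r < t.length, (t.map f).getD r 0 = f (t.getD r 0) := fun r hr => by
    rw [getD_eq_getElem _ _ (by simpa using hr), getD_eq_getElem _ _ hr, getElem_map]
  unfold OrderIsoWord
  rw [length_map]
  refine and_congr_right fun hlen => forall₄_congr fun r s hr hs => ?_
  rw [hget r (hlen ▸ hr), hget s (hlen ▸ hs), hf.lt_iff_lt, hf.injective.eq_iff]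

theorem avoids_map_iff {f : ℕ → ℕ} (hf : StrictMono f) {w σ : List ℕ} :
    Avoids (w.map f) σ ↔ Avoids w σ := by
  refine not_congr ⟨?_, ?_⟩
  · rintro ⟨_, hft, hiso⟩
    obtain ⟨t, ht, rfl⟩ := sublist_map_iff.1 hft
    exact ⟨t, ht, (orderIsoWord_map_iff hf).1 hiso⟩
  · rintro ⟨t, ht, hiso⟩
    exact ⟨t.map f, ht.map f, (orderIsoWord_map_iff hf).2 hiso⟩

theorem avoids_of_pairwise_le {w σ : List ℕ} (hw : w.Pairwise (· ≤ ·))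
    (hσ : ¬ σ.Pairwise (· ≤ ·)) : Avoids w σ := by
  rintro ⟨t, ht, hlen, hiso⟩
  refine hσ (pairwise_iff_getElem.2 fun r s hr hs hrs => not_lt.1 fun hsr => ?_)
  have hle := pairwise_iff_getElem.1 (hw.sublist ht) r s (hlen ▸ hr) (hlen ▸ hs) hrs
  have hlt := (hiso s r hs hr).1.2
  simp only [getD_eq_getElem _ _ hr, getD_eq_getElem _ _ hs, getD_eq_getElem _ _ (hlen ▸ hr),
    getD_eq_getElem _ _ (hlen ▸ hs)] at hlt
  exact absurd (hlt hsr) (not_lt.2 hle)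

theorem contains_132_of_sublist {w : List ℕ} {a b c : ℕ} (h : [a, b, c] <+ w)
    (hac : a < c) (hcb : c < b) : Contains w [1, 3, 2] := by
  refine ⟨[a, b, c], h, rfl, fun r s hr hs => ?_⟩
  simp only [length_cons, length_nil] at hr hs
  interval_cases r <;> interval_cases s <;> simp <;> omega

theorem contains_213_of_sublist {w : List ℕ} {a b c : ℕ} (h : [a, b, c] <+ w)
    (hba : b < a) (hac : a < c) : Contains w [2, 1, 3] := by
  refine ⟨[a, b, c], h, rfl, fun r s hr hs => ?_⟩
  simp only [length_cons, length_nil] at hr hs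
  interval_cases r <;> interval_cases s <;> simp <;> omega

theorem contains_312_of_sublist {w : List ℕ} {a b c : ℕ} (h : [a, b, c] <+ w)
    (hbc : b < c) (hca : c < a) : Contains w [3, 1, 2] := by
  refine ⟨[a, b, c], h, rfl, fun r s hr hs => ?_⟩
  simp only [length_cons, length_nil] at hr hs
  interval_cases r <;> interval_cases s <;> simp <;> omega

theorem contains_1221_iff (w : List ℕ) :
    Contains w [1, 2, 2, 1] ↔ ∃ a b, [a, b, b, a] <+ w ∧ a < b := by
  constructor
  · rintro ⟨t, ht, hlen, hiso⟩
    obtain ⟨a, b, c, d, rfl⟩ := length_eq_four.1 hlen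
    have hbc : b = c := by simpa using (hiso 1 2 (by simp) (by simp)).2
    have hda : d = a := by simpa using (hiso 3 0 (by simp) (by simp)).2
    subst hbc hda
    exact ⟨d, b, ht, by simpa using (hiso 0 1 (by simp) (by simp)).1⟩
  · rintro ⟨a, b, ht, hab⟩
    refine ⟨[a, b, b, a], ht, rfl, fun r s hr hs => ?_⟩
    simp only [length_cons, length_nil] at hr hs
    interval_cases r <;> interval_cases s <;> simp <;> omega

theorem eq_of_sublist_of_avoids {w : List ℕ} (h213 : Avoids w [2, 1, 3])
    (h312 : Avoids w [3, 1, 2]) {x m y : ℕ} (h : [x, m, y] <+ w) (hx : m < x) (hy : m < y) :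
    x = y := by
  rcases lt_trichotomy x y with hxy | hxy | hxy
  · exact absurd (contains_213_of_sublist h hx hxy) h213
  · exact hxy
  · exact absurd (contains_312_of_sublist h hy hxy) h312

namespace IsMultisetPerm

variable {n : ℕ} {w : List ℕ}

theorem mem_iff (hw : IsMultisetPerm n w) {x : ℕ} : x ∈ w ↔ 1 ≤ x ∧ x ≤ n := by
  rw [← count_pos_iff, hw x]
  split_ifs with h <;> simp [h]

theorem one_lt_of_mem (hw : IsMultisetPerm n w) {x : ℕ} (hx : x ∈ w) (hx1 : x ≠ 1) : 1 < x :=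
  lt_of_le_of_ne (hw.mem_iff.1 hx).1 hx1.symm

theorem exists_mem_ne (hw : IsMultisetPerm n w) (hn : 3 ≤ n) (p q : ℕ) :
    ∃ x ∈ w, x ≠ p ∧ x ≠ q := by
  have : ∃ x, 1 ≤ x ∧ x ≤ 3 ∧ x ≠ p ∧ x ≠ q := by
    by_cases h1 : p ≠ 1 ∧ q ≠ 1
    · exact ⟨1, by omega⟩
    by_cases h2 : p ≠ 2 ∧ q ≠ 2
    · exact ⟨2, by omega⟩
    exact ⟨3, by omega⟩
  obtain ⟨x, h1, h3, hp, hq⟩ := this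
  exact ⟨x, hw.mem_iff.2 ⟨h1, by omega⟩, hp, hq⟩

end IsMultisetPerm

def sortedWord : ℕ → List ℕ
  | 0 => []
  | n + 1 => 1 :: 1 :: (sortedWord n).map (· + 1)

theorem isMultisetPerm_sortedWord (n : ℕ) : IsMultisetPerm n (sortedWord n) := by
  induction n with
  | zero => intro i; simp [sortedWord]; omega
  | succ n ih =>
    rintro (_ | i)
    · simp [sortedWord, count_eq_zero]
    · simp only [sortedWord, count_cons, count_map_of_injective _ _ (add_left_injective 1), ih i]
      split_ifs <;> simp_all; omega

theorem pairwise_sortedWord (n : ℕ) : (sortedWord n).Pairwise (· ≤ ·) := by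
  induction n with
  | zero => simp [sortedWord]
  | succ n ih =>
    simp only [sortedWord, pairwise_cons, mem_cons, mem_map]
    refine ⟨?_, ?_, ih.map _ fun a b h => by omega⟩ <;>
      rintro _ (rfl | ⟨x, -, rfl⟩) <;> omega

theorem isMultisetPerm_iff_perm {n : ℕ} {w : List ℕ} :
    IsMultisetPerm n w ↔ w ~ sortedWord n := by
  rw [perm_iff_count]
  exact forall_congr' fun i => by rw [isMultisetPerm_sortedWord n i]

theorem IsMultisetPerm.eq_sortedWord {n : ℕ} {w : List ℕ} (hw : IsMultisetPerm n w)
    (hs : w.Pairwise (· ≤ ·)) : w = sortedWord n :=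
  (isMultisetPerm_iff_perm.1 hw).eq_of_pairwise (fun _ _ _ _ => le_antisymm) hs
    (pairwise_sortedWord n)

def nonnestingAvoiders (n : ℕ) : Set (List ℕ) :=
  {w | IsNonnesting n w ∧ Avoids w [1, 3, 2] ∧ Avoids w [2, 1, 3] ∧ Avoids w [3, 1, 2]}

theorem sortedWord_mem_nonnestingAvoiders (n : ℕ) : sortedWord n ∈ nonnestingAvoiders n := by
  have h := pairwise_sortedWord n
  exact ⟨⟨isMultisetPerm_sortedWord n, avoids_of_pairwise_le h (by decide),
    avoids_of_pairwise_le h (by decide)⟩, avoids_of_pairwise_le h (by decide),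
    avoids_of_pairwise_le h (by decide), avoids_of_pairwise_le h (by decide)⟩

def succAppendOnes (u : List ℕ) : List ℕ := u.map (· + 1) ++ [1, 1]

theorem succAppendOnes_injective : Function.Injective succAppendOnes := fun _ _ h =>
  map_injective_iff.2 (add_left_injective 1) (append_cancel_right h)

theorem one_le_of_mem_succAppendOnes {u : List ℕ} {x : ℕ} (hx : x ∈ succAppendOnes u) :
    1 ≤ x := by
  rw [succAppendOnes, mem_append, mem_map] at hx
  rcases hx with ⟨a, -, rfl⟩ | hx
  · omega
  · simp_all

theorem sublist_map_of_sublist_succAppendOnes {u t : List ℕ} {c : ℕ} (hc : c ≠ 1)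
    (h : t ++ [c] <+ succAppendOnes u) : t ++ [c] <+ u.map (· + 1) :=
  sublist_of_concat_sublist_append (by simpa using hc) h

theorem isMultisetPerm_succAppendOnes_iff {n : ℕ} {u : List ℕ} :
    IsMultisetPerm (n + 1) (succAppendOnes u) ↔ IsMultisetPerm n u := by
  rw [isMultisetPerm_iff_perm, isMultisetPerm_iff_perm, succAppendOnes, sortedWord,
    ← map_perm_map_iff (add_left_injective 1) (l' := sortedWord n),
    ← perm_append_right_iff [1, 1] (l₂ := (sortedWord n).map (· + 1))]
  exact ⟨fun h => h.trans (perm_append_comm (l₁ := [1, 1])),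
    fun h => h.trans (perm_append_comm (l₂ := [1, 1]))⟩

theorem avoids_succAppendOnes {u σ : List ℕ} (h : Avoids u σ)
    (hσ : ∃ r < σ.length, σ.getD r 0 < σ.getD (σ.length - 1) 0) :
    Avoids (succAppendOnes u) σ := by
  rintro ⟨t, ht, hlen, hiso⟩
  obtain ⟨r, hr, hlt⟩ := hσ
  obtain rfl | ⟨t, c, rfl⟩ := t.eq_nil_or_concat
  · rw [length_nil] at hlen
    omega
  rw [concat_eq_append] at ht hlen hiso
  -- an occurrence reaching into the appended `1`s ends in the smallest letter, contrary to `hσ`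
  have hc : c ≠ 1 := by
    have hlast : (t ++ [c]).getD (σ.length - 1) 0 = c := by simp [← hlen]
    have hpos : 1 ≤ (t ++ [c]).getD r 0 := by
      rw [getD_eq_getElem _ _ (hlen ▸ hr)]
      exact one_le_of_mem_succAppendOnes (ht.subset (getElem_mem _))
    have := (hiso r (σ.length - 1) hr (by omega)).1.2 hlt
    omega
  exact (avoids_map_iff (strictMono_id.add_const 1)).2 h
    ⟨t ++ [c], sublist_map_of_sublist_succAppendOnes hc ht, hlen, hiso⟩

theorem avoids_1221_succAppendOnes {u : List ℕ} (hu : 0 ∉ u) (h : Avoids u [1, 2, 2, 1]) :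
    Avoids (succAppendOnes u) [1, 2, 2, 1] := by
  rw [← avoids_map_iff (strictMono_id.add_const 1), Avoids, contains_1221_iff] at h
  rw [Avoids, contains_1221_iff]
  rintro ⟨a, b, hs, hab⟩
  have hb : b ≠ 1 := by
    have := one_le_of_mem_succAppendOnes (hs.subset (by simp : a ∈ _))
    omega
  by_cases ha : a = 1
  · subst ha
    have h1b := sublist_map_of_sublist_succAppendOnes (t := [1]) hb
      ((by simp : [1, b] <+ [1, b, b, 1]).trans hs)
    exact hu (by simpa using h1b.subset (mem_cons_self ..))
  · exact h ⟨a, b, sublist_map_of_sublist_succAppendOnes (t := [a, b, b]) ha hs, hab⟩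

theorem succAppendOnes_mem_iff {n : ℕ} {u : List ℕ} :
    succAppendOnes u ∈ nonnestingAvoiders (n + 1) ↔ u ∈ nonnestingAvoiders n := by
  have hlift : ∀ σ, Avoids (succAppendOnes u) σ → Avoids u σ := fun σ h =>
    (avoids_map_iff (strictMono_id.add_const 1)).1 (h.of_sublist (sublist_append_left _ _))
  constructor
  · rintro ⟨⟨hp, h1221, h2112⟩, h132, h213, h312⟩
    exact ⟨⟨isMultisetPerm_succAppendOnes_iff.1 hp, hlift _ h1221, hlift _ h2112⟩,
      hlift _ h132, hlift _ h213, hlift _ h312⟩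
  · rintro ⟨⟨hp, h1221, h2112⟩, h132, h213, h312⟩
    have hu0 : 0 ∉ u := fun h0 => by simpa using hp.mem_iff.1 h0
    exact ⟨⟨isMultisetPerm_succAppendOnes_iff.2 hp, avoids_1221_succAppendOnes hu0 h1221,
      avoids_succAppendOnes h2112 (by decide)⟩, avoids_succAppendOnes h132 (by decide),
      avoids_succAppendOnes h213 (by decide), avoids_succAppendOnes h312 (by decide)⟩

theorem IsMultisetPerm.eq_sortedWord_of_avoids_132 {n : ℕ} {z : List ℕ}
    (hw : IsMultisetPerm n (1 :: 1 :: z)) (hz : 1 ∉ z) (h132 : Avoids (1 :: 1 :: z) [1, 3, 2]) :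
    1 :: 1 :: z = sortedWord n := by
  have hz1 : ∀ y ∈ z, 1 < y := fun y hy =>
    hw.one_lt_of_mem (by simp [hy]) (ne_of_mem_of_not_mem hy hz)
  refine hw.eq_sortedWord ?_
  simp only [pairwise_cons, mem_cons]
  refine ⟨?_, fun a ha => (hz1 a ha).le, pairwise_iff_forall_sublist.2 fun {p q} hpq => ?_⟩
  · rintro a (rfl | ha)
    exacts [le_rfl, (hz1 a ha).le]
  · by_contra hqp
    exact h132 (contains_132_of_sublist ((hpq.cons 1).cons_cons 1)
      (hz1 q (hpq.subset (by simp))) (not_le.1 hqp))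

theorem IsMultisetPerm.contains_1221 {n : ℕ} {v : List ℕ} (hn : 2 ≤ n)
    (hw : IsMultisetPerm n (1 :: (v ++ [1]))) : Contains (1 :: (v ++ [1])) [1, 2, 2, 1] := by
  have hv2 : v.count 2 = 2 := by simpa [hn] using hw 2
  have h22 : [2, 2] <+ v := replicate_sublist_iff.2 hv2.ge
  exact (contains_1221_iff _).2 ⟨1, 2, (h22.append (Sublist.refl [1])).cons_cons 1, one_lt_two⟩

theorem append_one_one_eq_succAppendOnes {u : List ℕ} (hu : ∀ x ∈ u, x ≠ 0) :
    u ++ [1, 1] = succAppendOnes (u.map (· - 1)) := by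
  rw [succAppendOnes, map_map, map_congr_left (g := id) fun a ha => ?_, map_id]
  simp only [Function.comp, id]
  have := hu a ha
  omega

theorem eq_of_separated_by_one {n : ℕ} {u v z : List ℕ}
    (hw : IsMultisetPerm n (u ++ 1 :: (v ++ 1 :: z))) (hu : 1 ∉ u) (hv : 1 ∉ v) (hz : 1 ∉ z)
    (h213 : Avoids (u ++ 1 :: (v ++ 1 :: z)) [2, 1, 3])
    (h312 : Avoids (u ++ 1 :: (v ++ 1 :: z)) [3, 1, 2]) :
    (∀ x ∈ u, ∀ y ∈ v ++ z, x = y) ∧ ∀ x ∈ v, ∀ y ∈ z, x = y := by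
  have one_lt : ∀ x ∈ u ++ v ++ z, 1 < x := fun x hx => by
    refine hw.one_lt_of_mem ?_ ?_ <;> simp only [mem_append, mem_cons] at hx ⊢
    · tauto
    · rintro rfl
      tauto
  have cross : ∀ x ∈ u ++ v ++ z, ∀ y ∈ u ++ v ++ z,
      [x, 1, y] <+ u ++ 1 :: (v ++ 1 :: z) → x = y := fun x hx y hy hs =>
    eq_of_sublist_of_avoids h213 h312 hs (one_lt x hx) (one_lt y hy)
  refine ⟨fun x hx y hy => cross x (by simp [hx]) y (by simp at hy ⊢; tauto)
    (cons_sublist_append_cons hx (by simp at hy ⊢; tauto)), fun x hx y hy => ?_⟩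
  exact cross x (by simp [hx]) y (by simp [hy]) ((cons_sublist_append_cons hx hy).trans
    ((sublist_cons_self 1 _).trans (sublist_append_right u _)))

theorem eq_sortedWord_or_eq_succAppendOnes {n : ℕ} {w : List ℕ}
    (hw : w ∈ nonnestingAvoiders (n + 3)) :
    w = sortedWord (n + 3) ∨ ∃ u, w = succAppendOnes u := by
  obtain ⟨⟨hperm, h1221, -⟩, h132, h213, h312⟩ := hw
  obtain ⟨u, v, z, rfl, hu, hv, hz⟩ :=
    exists_eq_append_cons_append_cons_of_count_eq_two (by simpa using hperm 1)
  obtain ⟨hu_vz, hv_z⟩ := eq_of_separated_by_one hperm hu hv hz h213 h312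
  have two_values :
      ∀ p, (∀ x ∈ u, x = p) → (∀ x ∈ v, x = p) → (∀ x ∈ z, x = p) → False := by
    intro p hup hvp hzp
    obtain ⟨x, hx, hx1, hxp⟩ := hperm.exists_mem_ne (by omega) 1 p
    simp only [mem_append, mem_cons] at hx
    rcases hx with hx | hx | hx | hx | hx
    exacts [hxp (hup x hx), hx1 hx, hxp (hvp x hx), hx1 hx, hxp (hzp x hx)]
  rcases eq_or_ne u [] with rfl | hu0
  · rcases eq_or_ne v [] with rfl | hv0
    · exact .inl (hperm.eq_sortedWord_of_avoids_132 hz h132)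
    obtain ⟨y, hy⟩ := exists_mem_of_ne_nil v hv0
    rcases eq_or_ne z [] with rfl | hz0
    · exact absurd (hperm.contains_1221 (by omega)) h1221
    obtain ⟨y', hy'⟩ := exists_mem_of_ne_nil z hz0
    exact (two_values y' (by simp) (fun x hx => hv_z x hx y' hy')
      (fun x hx => (hv_z y hy x hx).symm.trans (hv_z y hy y' hy'))).elim
  obtain ⟨x, hx⟩ := exists_mem_of_ne_nil u hu0
  rcases eq_or_ne (v ++ z) [] with hvz | hvz
  · obtain ⟨rfl, rfl⟩ := append_eq_nil_iff.1 hvz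
    exact .inr ⟨_, append_one_one_eq_succAppendOnes fun a ha =>
      Nat.one_le_iff_ne_zero.1 (hperm.mem_iff.1 (by simp [ha])).1⟩
  obtain ⟨y, hy⟩ := exists_mem_of_ne_nil _ hvz
  exact (two_values x (fun a ha => (hu_vz a ha y hy).trans (hu_vz x hx y hy).symm)
    (fun a ha => (hu_vz x hx a (by simp [ha])).symm)
    (fun a ha => (hu_vz x hx a (by simp [ha])).symm)).elim

theorem nonnestingAvoiders_add_three (n : ℕ) :
    nonnestingAvoiders (n + 3) =
      insert (sortedWord (n + 3)) (succAppendOnes '' nonnestingAvoiders (n + 2)) := by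
  ext w
  constructor
  · intro hw
    rcases eq_sortedWord_or_eq_succAppendOnes hw with rfl | ⟨u, rfl⟩
    · exact Set.mem_insert _ _
    · exact Set.mem_insert_of_mem _ ⟨u, succAppendOnes_mem_iff.1 hw, rfl⟩
  · rintro (rfl | ⟨u, hu, rfl⟩)
    · exact sortedWord_mem_nonnestingAvoiders _
    · exact succAppendOnes_mem_iff.2 hu

theorem sortedWord_notMem_image_succAppendOnes (n : ℕ) :
    sortedWord (n + 2) ∉ succAppendOnes '' nonnestingAvoiders (n + 1) := by
  rintro ⟨_ | ⟨x, u⟩, hu, h⟩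
  · simp [sortedWord, succAppendOnes] at h
  · have hx := (hu.1.1.mem_iff.1 (mem_cons_self ..)).1
    simp only [sortedWord, succAppendOnes, map_cons, cons_append, cons.injEq] at h
    omega

theorem nonnestingAvoiders_two :
    nonnestingAvoiders 2 = {[1, 1, 2, 2], [1, 2, 1, 2], [2, 1, 2, 1], [2, 2, 1, 1]} := by
  ext w
  simp only [Set.mem_insert_iff, Set.mem_singleton_iff]
  constructor
  · rintro ⟨⟨hperm, h1221, h2112⟩, -⟩
    have hw := isMultisetPerm_iff_perm.1 hperm
    obtain ⟨a, b, c, d, rfl⟩ := length_eq_four.1 hw.length_eq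
    have hmem : ∀ x ∈ [a, b, c, d], x ∈ [1, 2] := fun x hx => by
      have := hperm.mem_iff.1 hx
      simp only [mem_cons, not_mem_nil]
      omega
    simp only [forall_mem_cons] at hmem
    have key : ∀ a ∈ [1, 2], ∀ b ∈ [1, 2], ∀ c ∈ [1, 2], ∀ d ∈ [1, 2],
        [a, b, c, d] ~ sortedWord 2 → Avoids [a, b, c, d] [1, 2, 2, 1] →
        Avoids [a, b, c, d] [2, 1, 1, 2] → [a, b, c, d] = [1, 1, 2, 2] ∨
        [a, b, c, d] = [1, 2, 1, 2] ∨ [a, b, c, d] = [2, 1, 2, 1] ∨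
        [a, b, c, d] = [2, 2, 1, 1] := by
      decide
    exact key a hmem.1 b hmem.2.1 c hmem.2.2.1 d hmem.2.2.2.1 hw h1221 h2112
  · rintro (rfl | rfl | rfl | rfl) <;>
      exact ⟨⟨isMultisetPerm_iff_perm.2 (by decide), by decide, by decide⟩,
        by decide, by decide, by decide⟩

theorem ncard_nonnestingAvoiders_add_two (n : ℕ) :
    (nonnestingAvoiders (n + 2)).ncard = n + 4 := by
  induction n with
  | zero => rw [nonnestingAvoiders_two]; simp [Set.ncard_insert_of_notMem]
  | succ n ih =>
    have hfin : (nonnestingAvoiders (n + 2)).Finite := Set.finite_of_ncard_ne_zero (by omega)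
    rw [nonnestingAvoiders_add_three, Set.ncard_insert_of_notMem
      (sortedWord_notMem_image_succAppendOnes _) (hfin.image _),
      succAppendOnes_injective.injOn.ncard_image, ih]

theorem nonnesting_avoid_132_213_312 (n : ℕ) (hn : 2 ≤ n) :
    {w : List ℕ | IsNonnesting n w ∧
      Avoids w [1,3,2] ∧ Avoids w [2,1,3] ∧ Avoids w [3,1,2]}.ncard = n + 2 := by
  obtain ⟨m, rfl⟩ := Nat.exists_eq_add_of_le' hn
  exact ncard_nonnestingAvoiders_add_two m
end

section
/- Let π be a nonnesting permutation of the multiset {1,1,2,2,…,n,n} and let ijk be any permutation of {1,2,3}. If π avoids either the pattern iijk or the pattern ijkk, then π avoids the pattern ijjk. -/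
section Helpers
open List

lemma myDecomp {a : ℕ} {l w : List ℕ} (h : a :: l <+ w) :
    ∃ u v, w = u ++ a :: v ∧ l <+ v := by
  obtain ⟨r₁, r₂, rfl, hm, hl⟩ := List.cons_sublist_iff.1 h
  obtain ⟨s, t, rfl⟩ := List.append_of_mem hm
  exact ⟨s, t ++ r₂, by simp, hl.trans (List.sublist_append_right t r₂)⟩

lemma myStep (x : ℕ) {l v : List ℕ} (u : List ℕ) (h : l <+ v) :
    x :: l <+ u ++ x :: v :=
  (h.cons₂ x).trans (List.sublist_append_right u _)

lemma mySkip (x : ℕ) {l v : List ℕ} (u : List ℕ) (h : l <+ v) :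
    l <+ u ++ x :: v :=
  ((h.cons x).trans (List.sublist_append_right u _))

lemma myMem {x : ℕ} {l v u : List ℕ} (hx : x ∈ u) (h : l <+ v) :
    x :: l <+ u ++ v := by
  obtain ⟨s, t, rfl⟩ := List.append_of_mem hx
  rw [List.append_assoc, List.cons_append]
  exact myStep x s (h.trans (List.sublist_append_right t v))

lemma iso_iijk {a b c i j k : ℕ}
    (h1 : a < b ↔ i < j) (h2 : b < a ↔ j < i) (h3 : a = b ↔ i = j)
    (h4 : a < c ↔ i < k) (h5 : c < a ↔ k < i) (h6 : a = c ↔ i = k)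
    (h7 : b < c ↔ j < k) (h8 : c < b ↔ k < j) (h9 : b = c ↔ j = k) :
    OrderIsoWord [a,a,b,c] [i,i,j,k] := by
  refine ⟨rfl, ?_⟩
  intro r s hr hs
  simp only [List.length_cons, List.length_nil] at hr hs
  interval_cases r <;> interval_cases s <;> simp <;> omega

lemma iso_ijkk {a b c i j k : ℕ}
    (h1 : a < b ↔ i < j) (h2 : b < a ↔ j < i) (h3 : a = b ↔ i = j)
    (h4 : a < c ↔ i < k) (h5 : c < a ↔ k < i) (h6 : a = c ↔ i = k)
    (h7 : b < c ↔ j < k) (h8 : c < b ↔ k < j) (h9 : b = c ↔ j = k) :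
    OrderIsoWord [a,b,c,c] [i,j,k,k] := by
  refine ⟨rfl, ?_⟩
  intro r s hr hs
  simp only [List.length_cons, List.length_nil] at hr hs
  interval_cases r <;> interval_cases s <;> simp <;> omega

lemma iso_1221 {x y : ℕ} (h : x < y) : OrderIsoWord [x,y,y,x] [1,2,2,1] := by
  refine ⟨rfl, ?_⟩
  intro r s hr hs
  simp only [List.length_cons, List.length_nil] at hr hs
  interval_cases r <;> interval_cases s <;> simp <;> omega

lemma iso_2112 {x y : ℕ} (h : y < x) : OrderIsoWord [x,y,y,x] [2,1,1,2] := by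
  refine ⟨rfl, ?_⟩
  intro r s hr hs
  simp only [List.length_cons, List.length_nil] at hr hs
  interval_cases r <;> interval_cases s <;> simp <;> omega

/-- A nesting `[x,y,y,x]` with `x ≠ y` contradicts nonnestingness. -/
lemma nestFalse {w : List ℕ} {x y : ℕ} (hne : x ≠ y) (hs : [x,y,y,x] <+ w)
    (h1 : Avoids w [1,2,2,1]) (h2 : Avoids w [2,1,1,2]) : False := by
  rcases hne.lt_or_gt with h | h
  · exact h1 ⟨[x,y,y,x], hs, iso_1221 h⟩
  · exact h2 ⟨[x,y,y,x], hs, iso_2112 h⟩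

end Helpers


theorem nonnesting_avoid_iijk_or_ijkk_imp_ijjk (n : ℕ) (w : List ℕ)
    (hw : IsNonnesting n w) (i j k : ℕ) (hijk : [i, j, k].Perm [1, 2, 3])
    (hav : Avoids w [i, i, j, k] ∨ Avoids w [i, j, k, k]) :
    Avoids w [i, j, j, k] := by
  rintro ⟨t, hsub, hlen, hrel⟩
  have hl4 : t.length = 4 := by simpa using hlen
  rcases t with _ | ⟨a, _ | ⟨b, _ | ⟨b', _ | ⟨c, _ | ⟨x, t⟩⟩⟩⟩⟩ <;> simp at hl4
  -- b = b'
  have h12 := hrel 1 2 (by simp) (by simp)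
  simp at h12
  have hbb : b = b' := h12.2
  subst hbb
  -- pairwise comparison facts
  have h01 := hrel 0 1 (by simp) (by simp)
  have h10 := hrel 1 0 (by simp) (by simp)
  have h03 := hrel 0 3 (by simp) (by simp)
  have h30 := hrel 3 0 (by simp) (by simp)
  have h13 := hrel 1 3 (by simp) (by simp)
  have h31 := hrel 3 1 (by simp) (by simp)
  simp only [show ∀ z1 z2 z3 z4 : ℕ, ([z1,z2,z3,z4].getD 0 0 = z1 ∧
      [z1,z2,z3,z4].getD 1 0 = z2 ∧ [z1,z2,z3,z4].getD 3 0 = z4) from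
      fun _ _ _ _ => ⟨rfl, rfl, rfl⟩] at h01 h10 h03 h30 h13 h31
  -- distinctness of i, j, k
  have hnd : [i, j, k].Nodup := hijk.nodup_iff.mpr (by decide)
  simp at hnd
  obtain ⟨⟨hij, hik⟩, hjk⟩ := hnd
  have hab : a ≠ b := fun h => hij (h01.2.mp h)
  have hac : a ≠ c := fun h => hik (h03.2.mp h)
  have hbc : b ≠ c := fun h => hjk (h13.2.mp h)
  -- decompose w
  obtain ⟨w1, r1, rfl, hs1⟩ := myDecomp hsub
  obtain ⟨w2, r2, rfl, hs2⟩ := myDecomp hs1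
  obtain ⟨w3, r3, rfl, hs3⟩ := myDecomp hs2
  obtain ⟨w4, w5, rfl, -⟩ := myDecomp hs3
  obtain ⟨hmp, hav1, hav2⟩ := hw
  rcases hav with hA | hA
  · -- avoid [i,i,j,k]; locate the second copy of a
    have hmem : a ∈ w1 ++ a :: (w2 ++ b :: (w3 ++ b :: (w4 ++ c :: w5))) := by simp
    have hcnt := hmp a
    rw [if_pos] at hcnt
    swap
    · have := hmp a
      by_contra h
      rw [if_neg h] at this
      exact (List.count_eq_zero.mp this) hmem
    simp [List.count_append, List.count_cons, hab.symm, hac.symm] at hcnt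
    have hloc : 0 < w1.count a ∨ 0 < w2.count a ∨ 0 < w3.count a ∨
        0 < w4.count a ∨ 0 < w5.count a := by omega
    have hiso : OrderIsoWord [a,a,b,c] [i,i,j,k] :=
      iso_iijk h01.1 h10.1 h01.2 h03.1 h30.1 h03.2 h13.1 h31.1 h13.2
    rcases hloc with h|h|h|h|h
    · exact hA ⟨[a,a,b,c], myMem (List.count_pos_iff.mp h)
        ((myStep b w2 (mySkip b w3 (myStep c w4 (List.nil_sublist w5)))).cons₂ a), hiso⟩
    · exact hA ⟨[a,a,b,c], myStep a w1 (myMem (List.count_pos_iff.mp h)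
        ((mySkip b w3 (myStep c w4 (List.nil_sublist w5))).cons₂ b)), hiso⟩
    · exact hA ⟨[a,a,b,c], myStep a w1 (mySkip b w2 (myMem (List.count_pos_iff.mp h)
        ((myStep c w4 (List.nil_sublist w5)).cons₂ b))), hiso⟩
    · exact nestFalse hab (myStep a w1 (myStep b w2 (myStep b w3
        (myMem (List.count_pos_iff.mp h) (List.nil_sublist (c :: w5)))))) hav1 hav2
    · exact nestFalse hab (myStep a w1 (myStep b w2 (myStep b w3
        (mySkip c w4 (List.singleton_sublist.mpr (List.count_pos_iff.mp h)))))) hav1 hav2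
  · -- avoid [i,j,k,k]; locate the second copy of c
    have hmem : c ∈ w1 ++ a :: (w2 ++ b :: (w3 ++ b :: (w4 ++ c :: w5))) := by simp
    have hcnt := hmp c
    rw [if_pos] at hcnt
    swap
    · have := hmp c
      by_contra h
      rw [if_neg h] at this
      exact (List.count_eq_zero.mp this) hmem
    simp [List.count_append, List.count_cons, hac, hbc] at hcnt
    have hloc : 0 < w1.count c ∨ 0 < w2.count c ∨ 0 < w3.count c ∨
        0 < w4.count c ∨ 0 < w5.count c := by omega
    have hiso : OrderIsoWord [a,b,c,c] [i,j,k,k] :=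
      iso_ijkk h01.1 h10.1 h01.2 h03.1 h30.1 h03.2 h13.1 h31.1 h13.2
    rcases hloc with h|h|h|h|h
    · exact nestFalse hbc.symm (myMem (List.count_pos_iff.mp h)
        ((myStep b w2 (myStep b w3 (myStep c w4 (List.nil_sublist w5)))).cons a)) hav1 hav2
    · exact nestFalse hbc.symm (mySkip a w1 (myMem (List.count_pos_iff.mp h)
        ((myStep b w3 (myStep c w4 (List.nil_sublist w5))).cons₂ b))) hav1 hav2
    · exact hA ⟨[a,b,c,c], myStep a w1 (myStep b w2 (myMem (List.count_pos_iff.mp h)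
        ((myStep c w4 (List.nil_sublist w5)).cons b))), hiso⟩
    · exact hA ⟨[a,b,c,c], myStep a w1 (myStep b w2 (mySkip b w3 (myMem
        (List.count_pos_iff.mp h) ((List.nil_sublist w5).cons₂ c)))), hiso⟩
    · exact hA ⟨[a,b,c,c], myStep a w1 (myStep b w2 (mySkip b w3 (myStep c w4
        (List.singleton_sublist.mpr (List.count_pos_iff.mp h))))), hiso⟩
end

section
/- For all n ≥ 1, the number of nonnesting permutations of the multiset {1,1,2,2,…,n,n} that avoid all six patterns 1231, 1321, 2132, 2312, 3123, and 3213 equals n!·F_n, where F_n is the nth Fibonacci number. -/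
/-!
In a word in which every letter occurs twice, the order types of subwords `x y z x` with
`y, z ≠ x` are exactly `1221`, `2112` and the six listed patterns. So the words counted are
those in which the two copies of each letter are separated by at most one letter
(`HasShortArcs`). Such a word begins with a block `a a` or `a b a b`, and deleting it leaves a
word of the same kind on the remaining letters. Hence the number `c n` of such words on `n`
letters satisfies `c (n + 2) = (n + 2) c (n + 1) + (n + 2) (n + 1) c n`, which is solved by
`n ! * fib (n + 1)`.
-/

open Finset Nat

theorem Finset.card_biUnion_of_tag {ι β : Type*} [DecidableEq β] {S : Finset ι}
    {X : ι → Finset β} (tag : β → Option ι) (htag : ∀ a ∈ S, ∀ x ∈ X a, tag x = some a) :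
    #(S.biUnion X) = ∑ a ∈ S, #(X a) :=
  card_biUnion fun a ha b hb hab => disjoint_left.2 fun x hxa hxb =>
    hab (Option.some_injective _ ((htag a ha x hxa).symm.trans (htag b hb x hxb)))

section Words

variable {α : Type*}

def HasShortArcs (w : List α) : Prop :=
  ∀ x y z : α, ¬ [x, y, z, x].Sublist w

theorem HasShortArcs.sublist {v w : List α} (hw : HasShortArcs w) (h : v.Sublist w) :
    HasShortArcs v :=
  fun x y z hv => hw x y z (hv.trans h)

theorem hasShortArcs_of_length_lt {w : List α} (h : w.length < 4) : HasShortArcs w :=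
  fun _ _ _ hw => by simpa using (hw.length_le.trans_lt h)

theorem hasShortArcs_abab {a b : α} (hab : a ≠ b) : HasShortArcs [a, b, a, b] := by
  intro x y z h
  obtain ⟨rfl, -, -, rfl⟩ : x = a ∧ y = b ∧ z = a ∧ x = b := by simpa using h.eq_of_length rfl
  exact hab rfl

theorem HasShortArcs.append {p w : List α} (hp : HasShortArcs p) (hw : HasShortArcs w)
    (hdisj : ∀ x ∈ p, x ∉ w) : HasShortArcs (p ++ w) := by
  intro x y z h
  obtain ⟨l₁, l₂, heq, h₁, h₂⟩ := List.sublist_append_iff.1 h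
  rcases l₁ with _ | ⟨u, l₁⟩
  · exact hw x y z (by simpa [heq] using h₂)
  have hxp : x ∈ p := h₁.subset (by simp_all)
  rcases l₂.eq_nil_or_concat with rfl | ⟨l₂, t, rfl⟩
  · exact hp x y z (by simpa [heq] using h₁)
  obtain ⟨rfl, -⟩ : t = x ∧ _ := by simpa using (congrArg List.reverse heq).symm
  exact hdisj t hxp (h₂.subset (by simp))

variable [DecidableEq α]

def IsDoubling (S : Finset α) (w : List α) : Prop :=
  ∀ i, w.count i = if i ∈ S then 2 else 0

theorem isDoubling_empty_iff {w : List α} : IsDoubling ∅ w ↔ w = [] := by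
  refine ⟨fun h => ?_, fun h i => by simp [h]⟩
  rcases w with _ | ⟨a, w⟩
  · rfl
  · simpa using h a

theorem IsDoubling.eq_empty_of_nil {S : Finset α} (h : IsDoubling S []) : S = ∅ :=
  eq_empty_of_forall_notMem fun i hi => by simpa [hi] using h i

theorem IsDoubling.count_eq_two {S : Finset α} {w : List α} (h : IsDoubling S w) {a : α}
    (ha : a ∈ w) : w.count a = 2 := by
  have := h a
  have := List.count_pos_iff.2 ha
  split_ifs at * <;> omega

theorem IsDoubling.count_le_two {S : Finset α} {w : List α} (h : IsDoubling S w) (a : α) :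
    w.count a ≤ 2 := by
  rw [h a]; split_ifs <;> omega

theorem IsDoubling.notMem {S : Finset α} {w : List α} (h : IsDoubling S w) {a : α}
    (ha : a ∉ S) : a ∉ w := by
  rw [← List.count_eq_zero, h a, if_neg ha]

theorem isDoubling_cons_cons_iff {S : Finset α} {a : α} {w : List α} :
    IsDoubling S (a :: a :: w) ↔ a ∈ S ∧ IsDoubling (S.erase a) w := by
  constructor
  · intro h
    have ha : a ∈ S := by by_contra ha; simpa [ha] using h a
    refine ⟨ha, fun i => ?_⟩
    have := h i
    by_cases hia : i = a
    · subst hia; simp [ha] at this ⊢; omega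
    · simpa [hia, Ne.symm hia, List.count_cons] using this
  · rintro ⟨ha, h⟩ i
    have := h i
    by_cases hia : i = a
    · subst hia; simp [ha] at this ⊢; omega
    · simpa [hia, Ne.symm hia, List.count_cons] using this

theorem isDoubling_abab_iff {S : Finset α} {a b : α} {w : List α} :
    IsDoubling S (a :: b :: a :: b :: w) ↔
      a ∈ S ∧ b ∈ S.erase a ∧ IsDoubling ((S.erase a).erase b) w := by
  have hperm : (a :: b :: a :: b :: w).Perm (a :: a :: b :: b :: w) :=
    .cons a (.swap a b _)
  simp only [IsDoubling, hperm.count_eq] at *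
  exact isDoubling_cons_cons_iff.trans (and_congr_right fun _ => isDoubling_cons_cons_iff)

theorem HasShortArcs.eq_cons_cons_or_abab {w : List α} (hs : HasShortArcs w)
    (hw : ∀ a ∈ w, w.count a = 2) (hne : w ≠ []) :
    (∃ a v, w = a :: a :: v) ∨ ∃ a b v, a ≠ b ∧ w = a :: b :: a :: b :: v := by
  obtain ⟨a, w, rfl⟩ := List.exists_cons_of_ne_nil hne
  have ha := hw a (by simp)
  rcases w with _ | ⟨b, w⟩
  · simp at ha
  obtain rfl | hba := eq_or_ne b a
  · exact .inl ⟨b, w, rfl⟩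
  rcases w with _ | ⟨c, w⟩
  · simp [hba] at ha
  obtain rfl | hca := eq_or_ne c a
  swap
  · have haw : a ∈ w := List.count_pos_iff.1 (by simp [hba, hca] at ha; omega)
    exact absurd (((List.singleton_sublist.2 haw).cons_cons c).cons_cons b |>.cons_cons a)
      (hs a b c)
  have hb := hw b (by simp)
  rcases w with _ | ⟨d, w⟩
  · simp [hba.symm] at hb
  obtain rfl | hdb := eq_or_ne d b
  · exact .inr ⟨c, d, w, hba.symm, rfl⟩
  · have hbw : b ∈ w := List.count_pos_iff.1 (by simp [List.count_cons, hdb] at hb; omega)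
    exact absurd
      ((((List.singleton_sublist.2 hbw).cons_cons d).cons_cons c |>.cons_cons b).cons c)
      (hs b c d)

/-- `n` is the cardinality of `S`; when `n = 1` the inner union ranges over the empty set
`S.erase a`, so the truncation in `n - 1` does no harm. -/
def shortArcWords : ℕ → Finset α → Finset (List α)
  | 0, _ => {[]}
  | n + 1, S => S.biUnion fun a =>
      (shortArcWords n (S.erase a)).image (a :: a :: ·) ∪
        (S.erase a).biUnion fun b =>
          (shortArcWords (n - 1) ((S.erase a).erase b)).image (a :: b :: a :: b :: ·)

theorem mem_shortArcWords {n : ℕ} {S : Finset α} (hS : #S = n) {w : List α} :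
    w ∈ shortArcWords n S ↔ IsDoubling S w ∧ HasShortArcs w := by
  induction n using Nat.strong_induction_on generalizing S w with
  | _ n ih =>
  rcases n with _ | n
  · rw [card_eq_zero.1 hS]
    simp only [shortArcWords, mem_singleton, isDoubling_empty_iff]
    exact ⟨fun h => ⟨h, h ▸ hasShortArcs_of_length_lt (by simp)⟩, And.left⟩
  have hcard₁ {a} (ha : a ∈ S) : #(S.erase a) = n := by simp [card_erase_of_mem ha, hS]
  have hcard₂ {a b} (ha : a ∈ S) (hb : b ∈ S.erase a) : #((S.erase a).erase b) = n - 1 := by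
    simp [card_erase_of_mem hb, hcard₁ ha]
  simp only [shortArcWords, mem_biUnion, mem_union, mem_image]
  constructor
  · rintro ⟨a, ha, ⟨v, hv, rfl⟩ | ⟨b, hb, v, hv, rfl⟩⟩
    · obtain ⟨hvd, hvs⟩ := (ih n (by omega) (hcard₁ ha)).1 hv
      refine ⟨isDoubling_cons_cons_iff.2 ⟨ha, hvd⟩, ?_⟩
      exact (hasShortArcs_of_length_lt (by simp) : HasShortArcs [a, a]).append hvs
        fun x hx => hvd.notMem (by simp_all)
    · obtain ⟨hvd, hvs⟩ := (ih (n - 1) (by omega) (hcard₂ ha hb)).1 hv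
      refine ⟨isDoubling_abab_iff.2 ⟨ha, hb, hvd⟩, ?_⟩
      exact (hasShortArcs_abab (ne_of_mem_erase hb).symm).append hvs
        fun x hx => hvd.notMem (by aesop)
  · rintro ⟨hd, hs⟩
    have hne : w ≠ [] := by
      rintro rfl
      simp [hd.eq_empty_of_nil] at hS
    rcases hs.eq_cons_cons_or_abab (fun _ => hd.count_eq_two) hne with
      ⟨a, v, rfl⟩ | ⟨a, b, v, -, rfl⟩
    · obtain ⟨ha, hvd⟩ := isDoubling_cons_cons_iff.1 hd
      have hvs := hs.sublist (((List.sublist_cons_self a v).cons a))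
      exact ⟨a, ha, .inl ⟨v, (ih n (by omega) (hcard₁ ha)).2 ⟨hvd, hvs⟩, rfl⟩⟩
    · obtain ⟨ha, hb, hvd⟩ := isDoubling_abab_iff.1 hd
      have hvs := hs.sublist (List.sublist_append_right [a, b, a, b] v)
      exact ⟨a, ha, .inr ⟨b, hb, v, (ih (n - 1) (by omega) (hcard₂ ha hb)).2 ⟨hvd, hvs⟩, rfl⟩⟩

theorem card_shortArcWords {n : ℕ} {S : Finset α} (hS : #S = n) :
    #(shortArcWords n S) = n ! * fib (n + 1) := by
  induction n using Nat.strong_induction_on generalizing S with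
  | _ n ih =>
  rcases n with _ | n
  · simp [shortArcWords]
  have hcard₁ {a} (ha : a ∈ S) : #(S.erase a) = n := by simp [card_erase_of_mem ha, hS]
  have hcard₂ {a b} (ha : a ∈ S) (hb : b ∈ S.erase a) : #((S.erase a).erase b) = n - 1 := by
    simp [card_erase_of_mem hb, hcard₁ ha]
  have hblock (a) (ha : a ∈ S) :
      #((shortArcWords n (S.erase a)).image (a :: a :: ·) ∪
        (S.erase a).biUnion fun b =>
          (shortArcWords (n - 1) ((S.erase a).erase b)).image (a :: b :: a :: b :: ·)) =
        n ! * fib (n + 1) + n * ((n - 1)! * fib (n - 1 + 1)) := by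
    rw [card_union_of_disjoint (disjoint_left.2 ?_),
      Finset.card_image_of_injective _ (fun _ _ h => by simpa using h),
      ih n (by omega) (hcard₁ ha), card_biUnion_of_tag (fun w => w.tail.head?) (by simp),
      sum_congr rfl fun b hb => by
        rw [Finset.card_image_of_injective _ (fun _ _ h => by simpa using h),
          ih (n - 1) (by omega) (hcard₂ ha hb)],
      sum_const, hcard₁ ha, smul_eq_mul]
    intro w hw₁ hw₂
    simp only [mem_image, mem_biUnion] at hw₁ hw₂
    obtain ⟨v, -, rfl⟩ := hw₁
    obtain ⟨b, hb, v', -, h⟩ := hw₂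
    simp only [List.cons.injEq] at h
    exact ne_of_mem_erase hb h.2.1
  have hfact : n * ((n - 1)! * fib (n - 1 + 1)) = n ! * fib n := by
    rcases n with _ | n <;> simp [factorial_succ, mul_assoc]
  rw [shortArcWords, card_biUnion_of_tag List.head? (by aesop), sum_congr rfl hblock, sum_const,
    hS, smul_eq_mul, hfact, factorial_succ, fib_add_two]
  ring

end Words

theorem orderIsoWord_map {σ : List ℕ} {f : ℕ → ℕ} {s : Set ℕ} (hf : StrictMonoOn f s)
    (hσ : ∀ k ∈ σ, k ∈ s) : OrderIsoWord (σ.map f) σ := by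
  refine ⟨List.length_map _, fun r t hr ht => ?_⟩
  simp only [List.getD_eq_getElem?_getD, List.getElem?_map, List.getElem?_eq_getElem hr,
    List.getElem?_eq_getElem ht, Option.map_some, Option.getD_some]
  have hr' := hσ _ (List.getElem_mem hr)
  have ht' := hσ _ (List.getElem_mem ht)
  exact ⟨hf.lt_iff_lt hr' ht', hf.injOn.eq_iff hr' ht'⟩

theorem avoids_of_hasShortArcs {w : List ℕ} (h : HasShortArcs w) (p q r : ℕ) :
    Avoids w [p, q, r, p] := by
  rintro ⟨t, hsub, hlen, hiso⟩
  obtain ⟨x, y, z, x', rfl⟩ := List.length_eq_four.1 hlen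
  obtain rfl : x = x' := by simpa using (hiso 0 3 (by simp) (by simp)).2
  exact h x y z hsub

theorem hasShortArcs_iff_avoids {w : List ℕ} (hw : ∀ a, w.count a ≤ 2) :
    HasShortArcs w ↔
      Avoids w [1,2,2,1] ∧ Avoids w [2,1,1,2] ∧ Avoids w [1,2,3,1] ∧ Avoids w [1,3,2,1] ∧
      Avoids w [2,1,3,2] ∧ Avoids w [2,3,1,2] ∧ Avoids w [3,1,2,3] ∧ Avoids w [3,2,1,3] := by
  refine ⟨fun h => ⟨avoids_of_hasShortArcs h _ _ _, avoids_of_hasShortArcs h _ _ _,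
    avoids_of_hasShortArcs h _ _ _, avoids_of_hasShortArcs h _ _ _,
    avoids_of_hasShortArcs h _ _ _, avoids_of_hasShortArcs h _ _ _,
    avoids_of_hasShortArcs h _ _ _, avoids_of_hasShortArcs h _ _ _⟩, ?_⟩
  rintro ⟨h1221, h2112, h1231, h1321, h2132, h2312, h3123, h3213⟩ x y z hsub
  have hx₃ := (hsub.count_le x).trans (hw x)
  have contains {σ : List ℕ} {a b c : ℕ} (hab : a < b) (hbc : b < c)
      (hσ : ∀ k ∈ σ, k ∈ Set.Icc 1 3)
      (h : (σ.map fun k => if k ≤ 1 then a else if k = 2 then b else c).Sublist w) :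
      Contains w σ := by
    refine ⟨_, h, orderIsoWord_map (s := Set.Icc 1 3) ?_ hσ⟩
    rintro i ⟨hi₁, hi₃⟩ j ⟨hj₁, hj₃⟩ hij
    dsimp only
    split_ifs <;> omega
  rcases lt_trichotomy y x with hyx | rfl | hxy
  · rcases lt_trichotomy z x with hzx | rfl | hxz
    · rcases lt_trichotomy y z with hyz | rfl | hzy
      · exact h3123 (contains hyz hzx (by simp) hsub)
      · exact h2112 (contains hyx (lt_add_one x) (by simp) hsub)
      · exact h3213 (contains hzy hyx (by simp) hsub)
    · simp [hyx.ne] at hx₃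
    · exact h2132 (contains hyx hxz (by simp) hsub)
  · simp [List.count_cons] at hx₃
  · rcases lt_trichotomy z x with hzx | rfl | hxz
    · exact h2312 (contains hzx hxy (by simp) hsub)
    · simp [hxy.ne'] at hx₃
    · rcases lt_trichotomy y z with hyz | rfl | hzy
      · exact h1231 (contains hxy hyz (by simp) hsub)
      · exact h1221 (contains hxy (lt_add_one y) (by simp) hsub)
      · exact h1321 (contains hxz hzy (by simp) hsub)

theorem isMultisetPerm_iff_isDoubling {n : ℕ} {w : List ℕ} :
    IsMultisetPerm n w ↔ IsDoubling (Finset.Icc 1 n) w := by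
  simp [IsMultisetPerm, IsDoubling]

theorem nonnesting_avoid_six_patterns_general (n : ℕ) :
    {w : List ℕ | IsNonnesting n w ∧
      Avoids w [1,2,3,1] ∧ Avoids w [1,3,2,1] ∧ Avoids w [2,1,3,2] ∧
      Avoids w [2,3,1,2] ∧ Avoids w [3,1,2,3] ∧ Avoids w [3,2,1,3]}.ncard =
      Nat.factorial n * Nat.fib (n + 1) := by
  have hcard : #(Finset.Icc 1 n) = n := by simp
  have hset : {w : List ℕ | IsNonnesting n w ∧
      Avoids w [1,2,3,1] ∧ Avoids w [1,3,2,1] ∧ Avoids w [2,1,3,2] ∧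
      Avoids w [2,3,1,2] ∧ Avoids w [3,1,2,3] ∧ Avoids w [3,2,1,3]} =
      shortArcWords n (Finset.Icc 1 n) := by
    ext w
    simp only [Set.mem_ofPred_eq, mem_coe, mem_shortArcWords hcard, IsNonnesting,
      isMultisetPerm_iff_isDoubling, and_assoc]
    exact and_congr_right fun hd => (hasShortArcs_iff_avoids hd.count_le_two).symm
  rw [hset, Set.ncard_coe_finset, card_shortArcWords hcard]

theorem nonnesting_avoid_six_patterns (n : ℕ) (hn : 1 ≤ n) :
    {w : List ℕ | IsNonnesting n w ∧
      Avoids w [1,2,3,1] ∧ Avoids w [1,3,2,1] ∧ Avoids w [2,1,3,2] ∧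
      Avoids w [2,3,1,2] ∧ Avoids w [3,1,2,3] ∧ Avoids w [3,2,1,3]}.ncard =
      Nat.factorial n * Nat.fib (n + 1) :=
  nonnesting_avoid_six_patterns_general n
end
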